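/- Let C, D be abelian K-categories and F: C → D an exact functor which is full and dense. Then KG(D) ≤ KG(C). -/

import Mathlib

/-!
# Krull-Gabriel dimension: core definitions

We define, for an abelian category `D` and a predicate `P` on its objects (thought of as
singling out a full abelian subcategory closed under the relevant subquotients), the
Krull-Gabriel filtration and the Krull-Gabriel dimension, with values in `WithTop Ordinal`
(where `⊤` plays the role of `∞`, i.e. "undefined").
-/

open CategoryTheory CategoryTheory.Limits

universe v u

namespace KG

variable {D : Type u} [Category.{v} D] [Abelian D]

/-- The subquotient (factor) attached to two nested subobjects `Y ≤ Z` of `X`. -/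
noncomputable def factor {X : D} (Y Z : Subobject X) (h : Y ≤ Z) : D :=
  cokernel (Subobject.ofLE Y Z h)

/-- An object `X` (satisfying `P`) is *simple modulo* a Serre class `S` (relative to the
ambient class `P`) if it does not lie in `S` and every `P`-subobject of `X` lies in `S`
or has quotient in `S`.  This expresses that the image of `X` in the Serre quotient
category `P/S` is a simple object. -/
def SimpleMod (P S : D → Prop) (X : D) : Prop :=
  P X ∧ ¬ S X ∧
    ∀ Y : Subobject X, P (Y : D) → (S (Y : D) ∨ S (cokernel Y.arrow))

/-- An object `X` (satisfying `P`) has *finite length modulo* a Serre class `S`: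
there is a finite chain of `P`-subobjects from `⊥` to `⊤` whose successive factors
lie in `S` or are simple modulo `S`.  This expresses that the image of `X` in the
Serre quotient category `P/S` has finite length. -/
def FinLengthMod (P S : D → Prop) (X : D) : Prop :=
  P X ∧ ∃ (n : ℕ) (c : Fin (n + 1) → Subobject X)
    (hc : ∀ i : Fin n, c i.castSucc ≤ c i.succ),
      c 0 = ⊥ ∧ c (Fin.last n) = ⊤ ∧ (∀ i : Fin (n + 1), P ((c i : D))) ∧
        ∀ i : Fin n, S (factor _ _ (hc i)) ∨ SimpleMod P S (factor _ _ (hc i))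

/-- The Krull-Gabriel filtration of (the full subcategory of) an abelian category:
`kgFilt P 0` consists of the objects of finite length (i.e. of finite length modulo the
zero Serre class, which is the `(-1)`-st filtration step), `kgFilt P (α+1)` consists of
the objects of finite length modulo `kgFilt P α`, and at limit ordinals the filtration
is the union of the preceding steps. -/
noncomputable def kgFilt (P : D → Prop) : Ordinal.{0} → (D → Prop) := fun o =>
  Ordinal.limitRecOn o
    (FinLengthMod P (fun X => Limits.IsZero X))
    (fun _ S => FinLengthMod P S)
    (fun o _ ih X => ∃ (o' : Ordinal.{0}) (h : o' < o), ih o' h X)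

open scoped Classical in
/-- The Krull-Gabriel dimension of the class `P` of objects of the abelian category `D`:
the least ordinal `α` such that the `α`-th step of the Krull-Gabriel filtration exhausts
all of `P`, and `⊤` (i.e. `∞`, "undefined") if there is no such ordinal. -/
noncomputable def kgDimP (P : D → Prop) : WithTop Ordinal.{0} :=
  if _h : ∃ o : Ordinal.{0}, ∀ X : D, P X → kgFilt P o X then
    ((sInf {o : Ordinal.{0} | ∀ X : D, P X → kgFilt P o X} : Ordinal.{0}) : WithTop Ordinal.{0})
  else ⊤

end KG

/-- The Krull-Gabriel dimension of an abelian category, defined via the Krull-Gabriel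
filtration by Serre subcategories. -/
noncomputable def KGdimAb (D : Type u) [Category.{v} D] [Abelian D] : WithTop Ordinal.{0} :=
  KG.kgDimP (D := D) (fun _ => True)

open CategoryTheory

/-!
An exact functor `F` preserves subobjects and their subquotients, and when `F` is moreover full
and dense every subobject of `F X` is the image of a subobject of `X`: lift the inclusion to a
morphism `A ⟶ X` and take its image, which `F` sends to the given subobject since `F` preserves
epimorphisms. Hence `F` carries composition series modulo a Serre class `S`
to composition series modulo any Serre class containing `F(S)`, and by transfinite induction
`F` maps the `α`-th step of the Krull-Gabriel filtration of `C` into that of `D`. So whenever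
`C_α` exhausts `C`, `D_α` exhausts `D`.
-/

namespace KG

open CategoryTheory.Limits

universe v₁ u₁ v₂ u₂

variable {C : Type u₁} [Category.{v₁} C] {D : Type u₂} [Category.{v₂} D]

section Subobjects

variable (F : C ⥤ D) [F.PreservesMonomorphisms]

/-- The image under `F` of a subobject of `X`, transported to any `X' ≅ F.obj X`; for `F = 𝟭 C`
this moves subobjects along isomorphisms. -/
noncomputable def mapSubobject {X : C} {X' : D} (e : F.obj X ≅ X') :
    Subobject X →o Subobject X' where
  toFun Y := Subobject.mk (F.map Y.arrow ≫ e.hom)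
  monotone' Y Z h := Subobject.mk_le_mk_of_comm (F.map (Subobject.ofLE Y Z h)) (by
    rw [← Category.assoc, ← F.map_comp, Subobject.ofLE_arrow])

variable {F}

theorem mapSubobject_top {X : C} {X' : D} (e : F.obj X ≅ X') :
    mapSubobject F e ⊤ = ⊤ :=
  Subobject.mk_eq_top_of_isIso _

noncomputable def mapSubobjectIso {X : C} {X' : D} (e : F.obj X ≅ X') (Y : Subobject X) :
    (mapSubobject F e Y : D) ≅ F.obj Y :=
  Subobject.underlyingIso _

theorem mapSubobjectIso_hom_comp {X : C} {X' : D} (e : F.obj X ≅ X') (Y : Subobject X) :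
    (mapSubobjectIso e Y).hom ≫ F.map Y.arrow ≫ e.hom = (mapSubobject F e Y).arrow :=
  Subobject.underlyingIso_hom_comp_eq_mk _

variable [Abelian C] [Abelian D]

theorem mapSubobject_bot [F.PreservesZeroMorphisms] {X : C} {X' : D} (e : F.obj X ≅ X') :
    mapSubobject F e ⊥ = ⊥ :=
  Subobject.mk_eq_bot_iff_zero.mpr (by simp)

variable [PreservesFiniteColimits F]

noncomputable def cokernelIsoOfComm {A B : C} (f : A ⟶ B) {A' B' : D} (g : A' ⟶ B')
    (a : A' ≅ F.obj A) (b : B' ≅ F.obj B) (w : g ≫ b.hom = a.hom ≫ F.map f) :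
    cokernel g ≅ F.obj (cokernel f) :=
  cokernel.mapIso g (F.map f) a b w ≪≫ (PreservesCokernel.iso F f).symm

noncomputable def cokernelMapSubobjectIso {X : C} {X' : D} (e : F.obj X ≅ X')
    (Y : Subobject X) :
    cokernel (mapSubobject F e Y).arrow ≅ F.obj (cokernel Y.arrow) :=
  cokernelIsoOfComm Y.arrow _ (mapSubobjectIso e Y) e.symm (by
    simp [← mapSubobjectIso_hom_comp e Y])

noncomputable def factorMapSubobjectIso {X : C} {X' : D} (e : F.obj X ≅ X')
    {Y Z : Subobject X} (h : Y ≤ Z) :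
    factor (mapSubobject F e Y) (mapSubobject F e Z) ((mapSubobject F e).monotone h) ≅
      F.obj (factor Y Z h) :=
  cokernelIsoOfComm (Subobject.ofLE Y Z h) _ (mapSubobjectIso e Y) (mapSubobjectIso e Z) (by
    simp [← cancel_mono (F.map Z.arrow ≫ e.hom), mapSubobjectIso_hom_comp, ← F.map_comp_assoc])

variable [F.Full] [F.EssSurj]

theorem exists_mapSubobject_eq {X : C} {X' : D} (e : F.obj X ≅ X') (W : Subobject X') :
    ∃ Y : Subobject X, mapSubobject F e Y = W := by
  let iA : F.obj (F.objPreimage W) ≅ W := F.objObjPreimageIso W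
  let m : F.objPreimage W ⟶ X := F.preimage (iA.hom ≫ W.arrow ≫ e.inv)
  let p := factorThruImageSubobject m
  have hFm : F.map p ≫ F.map (imageSubobject m).arrow = iA.hom ≫ W.arrow ≫ e.inv := by
    rw [← F.map_comp, imageSubobject_arrow_comp, F.map_preimage]
  have : Mono (F.map p) := by
    have : Mono (F.map p ≫ F.map (imageSubobject m).arrow) := by rw [hFm]; infer_instance
    exact mono_of_mono _ (F.map (imageSubobject m).arrow)
  have : IsIso (F.map p) := isIso_of_mono_of_epi _
  refine ⟨imageSubobject m, (Subobject.mk_eq_mk_of_comm _ _ ((asIso (F.map p)).symm ≪≫ iA) ?_).trans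
    (Subobject.mk_arrow W)⟩
  simp [← cancel_epi (F.map p), reassoc_of% hFm]

end Subobjects

section Transfer

variable [Abelian C] [Abelian D]

variable {F : C ⥤ D} [F.PreservesMonomorphisms] [PreservesFiniteColimits F] [F.Full] [F.EssSurj]
variable {S : C → Prop} {S' : D → Prop}

theorem SimpleMod.map (hS' : ∀ {A B : D}, (A ≅ B) → S' A → S' B)
    (hSS' : ∀ A : C, S A → S' (F.obj A)) {X : C} {X' : D} (e : F.obj X ≅ X')
    (hX : SimpleMod (fun _ => True) S X) :
    S' X' ∨ SimpleMod (fun _ => True) S' X' := by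
  refine or_iff_not_imp_left.mpr fun hX' => ⟨trivial, hX', fun W _ => ?_⟩
  obtain ⟨Y, rfl⟩ := exists_mapSubobject_eq e W
  exact (hX.2.2 Y trivial).imp
    (fun hY => hS' (mapSubobjectIso e Y).symm (hSS' _ hY))
    (fun hY => hS' (cokernelMapSubobjectIso e Y).symm (hSS' _ hY))

theorem FinLengthMod.map (hS' : ∀ {A B : D}, (A ≅ B) → S' A → S' B)
    (hSS' : ∀ A : C, S A → S' (F.obj A)) {X : C} {X' : D} (e : F.obj X ≅ X')
    (hX : FinLengthMod (fun _ => True) S X) :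
    FinLengthMod (fun _ => True) S' X' := by
  obtain ⟨-, n, c, hc, hbot, htop, -, hfactor⟩ := hX
  refine ⟨trivial, n, fun i => mapSubobject F e (c i), fun i => (mapSubobject F e).monotone (hc i),
    by simp [hbot, mapSubobject_bot], by simp [htop, mapSubobject_top], fun _ => trivial,
    fun i => ?_⟩
  have i' := (factorMapSubobjectIso e (hc i)).symm
  exact (hfactor i).elim (fun h => Or.inl (hS' i' (hSS' _ h))) (SimpleMod.map hS' hSS' i')

end Transfer

section Filtration

variable [Abelian C] [Abelian D]

theorem kgFilt_zero (P : D → Prop) :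
    kgFilt P 0 = FinLengthMod P (fun X => IsZero X) :=
  Ordinal.limitRecOn_zero _ _ _

theorem kgFilt_succ (P : D → Prop) (o : Ordinal.{0}) :
    kgFilt P (o + 1) = FinLengthMod P (kgFilt P o) :=
  Ordinal.limitRecOn_add_one _ _ _ _

theorem kgFilt_of_isSuccLimit (P : D → Prop) {o : Ordinal.{0}} (ho : Order.IsSuccLimit o) :
    kgFilt P o = fun X => ∃ o' : Ordinal.{0}, ∃ _ : o' < o, kgFilt P o' X :=
  Ordinal.limitRecOn_limit _ _ _ _ ho

theorem kgFilt_map (F : C ⥤ D) [F.PreservesMonomorphisms] [PreservesFiniteColimits F] [F.Full]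
    [F.EssSurj] (o : Ordinal.{0})
    (hD : ∀ o' < o, ∀ {A B : D}, (A ≅ B) → kgFilt (fun _ => True) o' A →
      kgFilt (fun _ => True) o' B)
    {X : C} {X' : D} (e : F.obj X ≅ X') (hX : kgFilt (fun _ => True) o X) :
    kgFilt (fun _ => True) o X' := by
  induction o using Ordinal.limitRecOn generalizing X X' with
  | zero =>
    rw [kgFilt_zero] at hX ⊢
    exact hX.map (fun i h => h.of_iso i.symm) (fun _ h => F.map_isZero h) e
  | add_one o IH =>
    have hlt : o < o + 1 := lt_add_one o
    rw [kgFilt_succ] at hX ⊢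
    exact hX.map (hD o hlt)
      (fun _ h => IH (fun o' h' => hD o' (h'.trans hlt)) (Iso.refl _) h) e
  | limit o hlim IH =>
    rw [kgFilt_of_isSuccLimit _ hlim] at hX ⊢
    obtain ⟨o', ho', h⟩ := hX
    exact ⟨o', ho', IH o' ho' (fun o'' h'' => hD o'' (h''.trans ho')) e h⟩

theorem kgFilt_of_iso (o : Ordinal.{0}) {A B : D} (i : A ≅ B)
    (hA : kgFilt (fun _ => True) o A) : kgFilt (fun _ => True) o B := by
  induction o using WellFoundedLT.induction generalizing A B with
  | _ o IH => exact kgFilt_map (𝟭 D) o IH i hA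

end Filtration

theorem kgDimP_le_kgDimP [Abelian C] [Abelian D] {P : C → Prop} {Q : D → Prop}
    (h : ∀ o, (∀ X, P X → kgFilt P o X) → ∀ Y, Q Y → kgFilt Q o Y) :
    kgDimP Q ≤ kgDimP P := by
  unfold kgDimP
  split_ifs with hQ hP hP
  · exact WithTop.coe_le_coe.mpr (csInf_le_csInf (OrderBot.bddBelow _) hP fun o ho => h o ho)
  · exact le_top
  · exact absurd (hP.imp fun o ho => h o ho) hQ
  · exact le_top

end KG

theorem kg_le_of_exact_full_dense_general
    (C : Type u) [Category.{v} C] [Abelian C]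
    (D : Type u') [Category.{v'} D] [Abelian D]
    (F : C ⥤ D)
    [Limits.PreservesFiniteLimits F] [Limits.PreservesFiniteColimits F]
    [F.Full] [F.EssSurj] :
    KGdimAb D ≤ KGdimAb C :=
  KG.kgDimP_le_kgDimP fun o hC X' _ =>
    KG.kgFilt_map F o (fun o' _ => KG.kgFilt_of_iso o') (F.objObjPreimageIso X') (hC _ trivial)

/-- **Lemma 2.4(a)** (Lemma `0(a)` in the paper):
if `C` and `D` are abelian `K`-categories and `F : C ⥤ D` is an exact functor which is
full and dense (essentially surjective), then `KG(D) ≤ KG(C)`. -/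
theorem kg_le_of_exact_full_dense
    (K : Type) [Field K]
    (C : Type u) [Category.{v} C] [Abelian C] [Linear K C]
    (D : Type u') [Category.{v'} D] [Abelian D] [Linear K D]
    (F : C ⥤ D) [F.Additive] [F.Linear K]
    [Limits.PreservesFiniteLimits F] [Limits.PreservesFiniteColimits F]
    [F.Full] [F.EssSurj] :
    KGdimAb D ≤ KGdimAb C :=
  kg_le_of_exact_full_dense_general C D F
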